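/- For every finite word w on {0,1} define |0,w⟩ := 2^{−1/2}(e_{0w} − e_{1w}) and, for n ≥ 1, |n,w⟩ := 2^{−(n+1)/2}( Σ_{u : ℓ(u)=n} e_{u0w} − Σ_{u : ℓ(u)=n} e_{u1w} ), where the sums run over all words u of length n. Then: (i) every |n,w⟩ (n ≥ 0) is a unit vector in L²(μ); (ii) K|n,w⟩ = |n+1,w⟩ for all n ≥ 0; (iii) L|n,w⟩ = |n−1,w⟩ for all n ≥ 1; (iv) L|0,w⟩ = 0; consequently (v) Kⁿ|0,w⟩ = |n,w⟩ and K L |n,w⟩ = |n,w⟩ for all n ≥ 1. -/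

import Mathlib

open MeasureTheory ContinuousLinearMap
open scoped RealInnerProductSpace InnerProductSpace ENNReal

noncomputable section

/-- The shift space `Ω = {0,1}^ℕ`, with `false` playing the role of the symbol `0`
and `true` of the symbol `1`. -/
abbrev Ω : Type := ℕ → Bool

/-- The shift map `σ`, `σ(x)ₙ = x_{n+1}`. -/
def shiftMap : Ω → Ω := fun x n => x (n + 1)

/-- Prepending a symbol: `consSeq a x = ax`. -/
def consSeq (a : Bool) (x : Ω) : Ω := fun n => Nat.casesOn n a (fun k => x k)

/-- The cylinder set `[w]` of sequences beginning with the finite word `w`. -/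
def cylinder (w : List Bool) : Set Ω := {x | ∀ i : Fin w.length, x (i : ℕ) = w.get i}

/-- The Hilbert space `L²(μ)` (real). -/
abbrev E (μ : Measure Ω) := Lp (α := Ω) ℝ 2 μ

/-- The Hilbert space `H = L²(μ) × L²(μ)` with the norm `√(‖φ‖² + ‖ψ‖²)`. -/
abbrev HS (μ : Measure Ω) := WithLp 2 (E μ × E μ)

variable {μ : Measure Ω}

/-- The diagonal block operator `(φ, ψ) ↦ (A₁φ, A₂ψ)` on `H`. -/
def blockDiag (A₁ A₂ : E μ →L[ℝ] E μ) : HS μ →L[ℝ] HS μ :=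
  ((WithLp.prodContinuousLinearEquiv 2 ℝ (E μ) (E μ)).symm.toContinuousLinearMap).comp
    (((A₁.comp (ContinuousLinearMap.fst ℝ (E μ) (E μ))).prod
        (A₂.comp (ContinuousLinearMap.snd ℝ (E μ) (E μ)))).comp
      (WithLp.prodContinuousLinearEquiv 2 ℝ (E μ) (E μ)).toContinuousLinearMap)

/-- The antidiagonal block operator `(φ, ψ) ↦ (A₁ψ, A₂φ)` on `H`. -/
def blockAntidiag (A₁ A₂ : E μ →L[ℝ] E μ) : HS μ →L[ℝ] HS μ :=
  ((WithLp.prodContinuousLinearEquiv 2 ℝ (E μ) (E μ)).symm.toContinuousLinearMap).comp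
    (((A₁.comp (ContinuousLinearMap.snd ℝ (E μ) (E μ))).prod
        (A₂.comp (ContinuousLinearMap.fst ℝ (E μ) (E μ)))).comp
      (WithLp.prodContinuousLinearEquiv 2 ℝ (E μ) (E μ)).toContinuousLinearMap)

/-- The diagonal representation `π(A)(φ,ψ) = (Aφ, Aψ)`. -/
def diagRep (A : E μ →L[ℝ] E μ) : HS μ →L[ℝ] HS μ := blockDiag A A

/-- The Dirac operator `D(φ,ψ) = (Kψ, Lφ)` associated with the pair `(K, L)`. -/
def dirac (K L : E μ →L[ℝ] E μ) : HS μ →L[ℝ] HS μ := blockAntidiag K L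

/-- The commutator `[D, π(A)]`. -/
def commD (K L A : E μ →L[ℝ] E μ) : HS μ →L[ℝ] HS μ :=
  (dirac K L).comp (diagRep A) - (diagRep A).comp (dirac K L)

/-- The rank-one orthogonal projection onto the span of the unit vector `ψ`:
`φ ↦ ⟪ψ, φ⟫ • ψ`. -/
def rankOneProj (ψ : E μ) : E μ →L[ℝ] E μ := (innerSL ℝ ψ).smulRight ψ

/-- The Haar-basis element `e_w = 2^{ℓ(w)/2} (χ_{[w1]} - χ_{[w0]})`, as a function on `Ω`. -/
def haarFun (w : List Bool) : Ω → ℝ := fun x =>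
  (2 : ℝ) ^ ((w.length : ℝ) / 2) *
    ((cylinder (w ++ [true])).indicator 1 x - (cylinder (w ++ [false])).indicator 1 x)

lemma continuous_shiftMap : Continuous shiftMap :=
  continuous_pi fun n => continuous_apply (n + 1)

lemma continuous_consSeq (a : Bool) : Continuous (consSeq a) := by
  apply continuous_pi
  intro n
  cases n with
  | zero => exact continuous_const
  | succ k => exact continuous_apply k

/-- The Koopman operator on continuous functions: `f ↦ f ∘ σ`. -/
def koopmanC (f : C(Ω, ℝ)) : C(Ω, ℝ) := f.comp ⟨shiftMap, continuous_shiftMap⟩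

/-- The Ruelle operator on continuous functions: `(Lf)(x) = (f(0x) + f(1x))/2`. -/
def ruelleC (f : C(Ω, ℝ)) : C(Ω, ℝ) :=
  ⟨fun x => (f (consSeq false x) + f (consSeq true x)) / 2,
    ((f.continuous.comp (continuous_consSeq false)).add
      (f.continuous.comp (continuous_consSeq true))).div_const 2⟩

end
section
variable {μ : Measure Ω}

/-- The vector `|n,w⟩ = 2^{−(n+1)/2}(Σ_{ℓ(u)=n} e_{u0w} − Σ_{ℓ(u)=n} e_{u1w})`
(for `n = 0` this is `2^{−1/2}(e_{0w} − e_{1w})`). -/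
noncomputable def ket (e : List Bool → E μ) (n : ℕ) (w : List Bool) : E μ :=
  (2 : ℝ) ^ (-((n : ℝ) + 1) / 2) •
    ((∑ u : Fin n → Bool, e (List.ofFn u ++ (false :: w))) -
      ∑ u : Fin n → Bool, e (List.ofFn u ++ (true :: w)))

end

/-!
Since `μ` is determined by its values on cylinders, the shift preserves `μ` (so `K` is an
isometry) and each prefixing map `x ↦ ax` pushes `μ` forward to `2 μ|_{[a]}` (so a.e. identities
pull back along it). Pointwise, `e_w ∘ σ = 2^{-1/2} (e_{0w} + e_{1w})` and
`(e_{bw}(0x) + e_{bw}(1x)) / 2 = 2^{-1/2} e_w(x)`; summed over the prefixes `u`, these say that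
`K` raises and `L` lowers the index of `|n,w⟩`, with `L|0,w⟩ = 0` because the two terms cancel.
The norm is `1` at `n = 0` because `e_{0w}` and `e_{1w}` are orthonormal, and `K` preserves it.
-/

lemma cylinder_nil : cylinder [] = Set.univ :=
  Set.eq_univ_of_forall fun _ i => i.elim0

lemma mem_cylinder_cons {a : Bool} {w : List Bool} {x : Ω} :
    x ∈ cylinder (a :: w) ↔ x 0 = a ∧ shiftMap x ∈ cylinder w :=
  ⟨fun h => ⟨h 0, fun i => h i.succ⟩, fun ⟨h0, h⟩ i => Fin.cases h0 (fun i => h i) i⟩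

lemma consSeq_mem_cylinder_cons {a b : Bool} {w : List Bool} {x : Ω} :
    consSeq a x ∈ cylinder (b :: w) ↔ a = b ∧ x ∈ cylinder w :=
  mem_cylinder_cons

lemma mem_cylinder_concat {w : List Bool} {c : Bool} {x : Ω} :
    x ∈ cylinder (w ++ [c]) ↔ x ∈ cylinder w ∧ x w.length = c := by
  induction w generalizing x with
  | nil => simp [mem_cylinder_cons, cylinder_nil]
  | cons a w ih =>
    rw [List.cons_append, mem_cylinder_cons, mem_cylinder_cons, ih, and_assoc]
    rfl

lemma preimage_shiftMap_cylinder (w : List Bool) :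
    shiftMap ⁻¹' cylinder w = cylinder (false :: w) ∪ cylinder (true :: w) := by
  ext x
  cases h : x 0 <;> simp [mem_cylinder_cons, h]

lemma measurableSet_cylinder (w : List Bool) : MeasurableSet (cylinder w) := by
  simp only [_root_.cylinder, Set.ofPred_forall]
  exact .iInter fun i => measurable_pi_apply _ (measurableSet_singleton _)

lemma cylinder_inter_cylinder_of_length_le {w v : List Bool} (hl : w.length ≤ v.length)
    (hne : (cylinder w ∩ cylinder v).Nonempty) : cylinder w ∩ cylinder v = cylinder v := by
  obtain ⟨x, hxw, hxv⟩ := hne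
  refine Set.inter_eq_right.mpr fun y hy i => ?_
  have hi : (i : ℕ) < v.length := i.isLt.trans_le hl
  rw [hy ⟨i, hi⟩, ← hxv ⟨i, hi⟩, hxw i]

lemma isPiSystem_range_cylinder : IsPiSystem (Set.range cylinder) := by
  rintro _ ⟨w, rfl⟩ _ ⟨v, rfl⟩ hne
  rcases le_total w.length v.length with h | h
  · exact ⟨v, (cylinder_inter_cylinder_of_length_le h hne).symm⟩
  · rw [Set.inter_comm] at hne ⊢
    exact ⟨w, (cylinder_inter_cylinder_of_length_le h hne).symm⟩

lemma generateFrom_range_cylinder :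
    MeasurableSpace.generateFrom (Set.range cylinder) = MeasurableSpace.pi := by
  set m := MeasurableSpace.generateFrom (Set.range cylinder)
  refine le_antisymm (MeasurableSpace.generateFrom_le ?_) ?_
  · rintro _ ⟨w, rfl⟩
    exact measurableSet_cylinder w
  have hσ : Measurable[m, m] shiftMap := by
    refine @measurable_generateFrom _ _ m _ _ ?_
    rintro _ ⟨w, rfl⟩
    rw [preimage_shiftMap_cylinder]
    exact MeasurableSet.union
      (MeasurableSpace.measurableSet_generateFrom (Set.mem_range_self (false :: w)))
      (MeasurableSpace.measurableSet_generateFrom (Set.mem_range_self (true :: w)))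
  -- coordinate `i + 1` is coordinate `i` after a shift
  have hcoord : ∀ i b, MeasurableSet[m] {x : Ω | x i = b} := by
    intro i
    induction i with
    | zero =>
      intro b
      refine MeasurableSpace.measurableSet_generateFrom ⟨[b], ?_⟩
      ext x
      simp [mem_cylinder_cons, cylinder_nil]
    | succ i ih => exact fun b => hσ (ih b)
  have hid : Measurable[m, MeasurableSpace.pi] (id : Ω → Ω) :=
    @measurable_pi_iff _ _ _ m _ _ |>.mpr fun i => @measurable_to_countable' _ _ _ _ m _ (hcoord i)
  simpa using hid.comap_le

lemma ext_of_cylinder {ν ν' : Measure Ω} [IsFiniteMeasure ν]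
    (h : ∀ w, ν (cylinder w) = ν' (cylinder w)) : ν = ν' :=
  ext_of_generate_finite _ generateFrom_range_cylinder.symm isPiSystem_range_cylinder
    (by rintro _ ⟨w, rfl⟩; exact h w) (by simpa [cylinder_nil] using h [])

lemma ENNReal.two_mul_half_pow_succ (n : ℕ) :
    (2 : ℝ≥0∞) * (1 / 2) ^ (n + 1) = (1 / 2) ^ n := by
  rw [pow_succ, mul_comm, mul_assoc, one_div,
    ENNReal.inv_mul_cancel two_ne_zero ENNReal.ofNat_ne_top, mul_one]

lemma preimage_consSeq_cylinder_cons (a b : Bool) (w : List Bool) :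
    consSeq a ⁻¹' cylinder (b :: w) = if a = b then cylinder w else ∅ := by
  ext x
  split_ifs with h <;> simp [consSeq_mem_cylinder_cons, h]

lemma cylinder_cons_inter_cylinder_singleton (a b : Bool) (w : List Bool) :
    cylinder (b :: w) ∩ cylinder [a] = if a = b then cylinder (b :: w) else ∅ := by
  split_ifs with h
  · subst h
    refine Set.inter_eq_left.mpr fun x hx =>
      mem_cylinder_cons.mpr ⟨(mem_cylinder_cons.mp hx).1, ?_⟩
    rw [cylinder_nil]
    trivial
  · exact Set.eq_empty_of_forall_notMem fun x ⟨hb, ha⟩ =>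
      h ((mem_cylinder_cons.mp ha).1.symm.trans (mem_cylinder_cons.mp hb).1)

def IsUniformBernoulli (μ : Measure Ω) : Prop :=
  ∀ w : List Bool, μ (cylinder w) = (1 / 2) ^ w.length

section Bernoulli

variable {μ : Measure Ω} [IsProbabilityMeasure μ]

lemma measurePreserving_shiftMap (hμ : IsUniformBernoulli μ) :
    MeasurePreserving shiftMap μ μ := by
  have hσ : Measurable shiftMap := continuous_shiftMap.measurable
  refine ⟨hσ, ext_of_cylinder fun w => ?_⟩
  have hdisj : Disjoint (cylinder (false :: w)) (cylinder (true :: w)) :=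
    Set.disjoint_left.mpr fun _ h0 h1 =>
      Bool.false_ne_true ((mem_cylinder_cons.mp h0).1.symm.trans (mem_cylinder_cons.mp h1).1)
  rw [Measure.map_apply hσ (measurableSet_cylinder w), preimage_shiftMap_cylinder,
    measure_union hdisj (measurableSet_cylinder _), hμ, hμ, hμ, List.length_cons,
    List.length_cons, ← two_mul,
    ENNReal.two_mul_half_pow_succ]

lemma map_consSeq (hμ : IsUniformBernoulli μ) (a : Bool) :
    μ.map (consSeq a) = (2 : ℝ≥0∞) • μ.restrict (cylinder [a]) := by
  have hc : Measurable (consSeq a) := (continuous_consSeq a).measurable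
  refine ext_of_cylinder fun w => ?_
  rw [Measure.map_apply hc (measurableSet_cylinder w), Measure.smul_apply,
    Measure.restrict_apply (measurableSet_cylinder w), smul_eq_mul]
  cases w with
  | nil =>
    rw [cylinder_nil, Set.preimage_univ, Set.univ_inter, measure_univ, hμ, List.length_singleton,
      ENNReal.two_mul_half_pow_succ 0, pow_zero]
  | cons b w =>
    rw [preimage_consSeq_cylinder_cons, cylinder_cons_inter_cylinder_singleton]
    split_ifs
    · rw [hμ, hμ, List.length_cons, ENNReal.two_mul_half_pow_succ]
    · simp

lemma quasiMeasurePreserving_consSeq (hμ : IsUniformBernoulli μ)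
    (a : Bool) : Measure.QuasiMeasurePreserving (consSeq a) μ μ := by
  refine ⟨(continuous_consSeq a).measurable, ?_⟩
  rw [map_consSeq hμ a]
  exact (Measure.absolutelyContinuous_of_le Measure.restrict_le_self).smul_left 2

end Bernoulli

lemma two_rpow_div_two (x : ℝ) : (2 : ℝ) ^ (x / 2) = √2 ^ x := by
  rw [Real.sqrt_eq_rpow, ← Real.rpow_mul zero_le_two, one_div_mul_eq_div]

lemma haarFun_eq (w : List Bool) (x : Ω) :
    haarFun w x = √2 ^ w.length *
      ((cylinder (w ++ [true])).indicator 1 x - (cylinder (w ++ [false])).indicator 1 x) := by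
  rw [haarFun, two_rpow_div_two, Real.rpow_natCast]

lemma haarFun_cons (b : Bool) (w : List Bool) (x : Ω) :
    haarFun (b :: w) x = if x 0 = b then √2 * haarFun w (shiftMap x) else 0 := by
  classical
  simp only [haarFun_eq, List.cons_append, Set.indicator_apply, mem_cylinder_cons,
    List.length_cons, pow_succ]
  split_ifs <;> simp_all <;> ring

lemma haarFun_mul_self (w : List Bool) (x : Ω) :
    haarFun w x * haarFun w x = 2 ^ w.length * (cylinder w).indicator 1 x := by
  have hsq : √2 ^ w.length * √2 ^ w.length = (2 : ℝ) ^ w.length := by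
    rw [← mul_pow, Real.mul_self_sqrt zero_le_two]
  classical
  simp only [haarFun_eq, Set.indicator_apply, mem_cylinder_concat]
  cases x w.length <;> split_ifs <;> simp_all

lemma haarFun_shiftMap (w : List Bool) (x : Ω) :
    haarFun w (shiftMap x) = (√2)⁻¹ * (haarFun (false :: w) x + haarFun (true :: w) x) := by
  rw [haarFun_cons, haarFun_cons]
  cases x 0 <;> field_simp <;> simp

lemma haarFun_cons_consSeq (a b : Bool) (w : List Bool) (x : Ω) :
    haarFun (b :: w) (consSeq a x) = if a = b then √2 * haarFun w x else 0 :=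
  haarFun_cons b w (consSeq a x)

lemma haarFun_false_mul_true (w : List Bool) (x : Ω) :
    haarFun (false :: w) x * haarFun (true :: w) x = 0 := by
  rw [haarFun_cons, haarFun_cons]
  cases x 0 <;> simp

section HaarBasis

variable {μ : Measure Ω} {e : List Bool → E μ}

lemma norm_koopman [IsProbabilityMeasure μ] (hμ : IsUniformBernoulli μ)
    {K : E μ →L[ℝ] E μ}
    (hK : ∀ g : E μ, (K g : Ω → ℝ) =ᵐ[μ] fun x => g (shiftMap x))
    (g : E μ) : ‖K g‖ = ‖g‖ := by
  have hσ := measurePreserving_shiftMap hμ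
  rw [show K g = Lp.compMeasurePreserving shiftMap hσ g from
    Lp.ext ((hK g).trans (Lp.coeFn_compMeasurePreserving g hσ).symm),
    Lp.norm_compMeasurePreserving]

lemma koopman_haar [IsProbabilityMeasure μ] (hμ : IsUniformBernoulli μ)
    {K : E μ →L[ℝ] E μ}
    (hK : ∀ g : E μ, (K g : Ω → ℝ) =ᵐ[μ] fun x => g (shiftMap x))
    (he : ∀ w, (e w : Ω → ℝ) =ᵐ[μ] haarFun w) (w : List Bool) :
    K (e w) = (√2)⁻¹ • (e (false :: w) + e (true :: w)) := by
  refine Lp.ext ?_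
  filter_upwards [hK (e w),
    (measurePreserving_shiftMap hμ).quasiMeasurePreserving.ae_eq_comp (he w),
    Lp.coeFn_smul (√2)⁻¹ (e (false :: w) + e (true :: w)),
    Lp.coeFn_add (e (false :: w)) (e (true :: w)), he (false :: w), he (true :: w)]
    with x hKx hx hsmul hadd h0 h1
  simp only [Function.comp_apply] at hx
  rw [hKx, hx, hsmul, Pi.smul_apply, hadd, Pi.add_apply, h0, h1,
    haarFun_shiftMap, smul_eq_mul]

lemma ruelle_haar [IsProbabilityMeasure μ] (hμ : IsUniformBernoulli μ)
    {L : E μ →L[ℝ] E μ}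
    (hL : ∀ g : E μ, (L g : Ω → ℝ) =ᵐ[μ]
      fun x => (g (consSeq false x) + g (consSeq true x)) / 2)
    (he : ∀ w, (e w : Ω → ℝ) =ᵐ[μ] haarFun w) (b : Bool) (w : List Bool) :
    L (e (b :: w)) = (√2)⁻¹ • e w := by
  refine Lp.ext ?_
  filter_upwards [hL (e (b :: w)),
    (quasiMeasurePreserving_consSeq hμ false).ae_eq_comp (he (b :: w)),
    (quasiMeasurePreserving_consSeq hμ true).ae_eq_comp (he (b :: w)),
    Lp.coeFn_smul (√2)⁻¹ (e w), he w] with x hLx hx0 hx1 hsmul hw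
  simp only [Function.comp_apply] at hx0 hx1
  rw [hLx, hx0, hx1, hsmul, Pi.smul_apply, hw,
    haarFun_cons_consSeq, haarFun_cons_consSeq, smul_eq_mul]
  have hsum : ((if false = b then √2 * haarFun w x else 0) +
      if true = b then √2 * haarFun w x else 0) = √2 * haarFun w x := by
    cases b <;> simp
  rw [hsum, mul_div_right_comm, Real.sqrt_div_self', one_div]

lemma norm_haar (hμ : IsUniformBernoulli μ)
    (he : ∀ w, (e w : Ω → ℝ) =ᵐ[μ] haarFun w) (w : List Bool) : ‖e w‖ = 1 := by
  have hinner : ⟪e w, e w⟫_ℝ = 1 := by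
    rw [L2.inner_def]
    calc ∫ x, ⟪(e w : Ω → ℝ) x, (e w : Ω → ℝ) x⟫_ℝ ∂μ
        = ∫ x, 2 ^ w.length * (cylinder w).indicator 1 x ∂μ := by
          refine integral_congr_ae ?_
          filter_upwards [he w] with x hx
          rw [Real.inner_apply, hx, haarFun_mul_self]
      _ = 1 := by
          rw [integral_const_mul, integral_indicator_one (measurableSet_cylinder w),
            measureReal_def, hμ, ENNReal.toReal_pow]
          simp
  rw [norm_eq_sqrt_real_inner, hinner, Real.sqrt_one]

lemma inner_haar_false_true (he : ∀ w, (e w : Ω → ℝ) =ᵐ[μ] haarFun w) (w : List Bool) :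
    ⟪e (false :: w), e (true :: w)⟫_ℝ = 0 := by
  rw [L2.inner_def]
  refine (integral_congr_ae ?_).trans (integral_zero _ _)
  filter_upwards [he (false :: w), he (true :: w)] with x h0 h1
  rw [Real.inner_apply, h0, h1, haarFun_false_mul_true]

end HaarBasis

lemma sum_ofFn_append_succ {M : Type*} [AddCommMonoid M] (F : List Bool → M) (n : ℕ)
    (l : List Bool) :
    ∑ u : Fin (n + 1) → Bool, F (List.ofFn u ++ l) =
      ∑ u : Fin n → Bool,
        (F (false :: (List.ofFn u ++ l)) + F (true :: (List.ofFn u ++ l))) := by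
  rw [← (Fin.consEquiv fun _ => Bool).sum_comp, Fintype.sum_prod_type, Fintype.sum_bool,
    add_comm, ← Finset.sum_add_distrib]
  simp [Fin.consEquiv_apply]

section Ket

variable {μ : Measure Ω} {e : List Bool → E μ} {K L : E μ →L[ℝ] E μ}

lemma ket_eq (n : ℕ) (w : List Bool) :
    ket e n w = (√2)⁻¹ ^ (n + 1) •
      ((∑ u : Fin n → Bool, e (List.ofFn u ++ (false :: w))) -
        ∑ u : Fin n → Bool, e (List.ofFn u ++ (true :: w))) := by
  rw [ket, two_rpow_div_two, Real.rpow_neg (Real.sqrt_nonneg 2), ← Nat.cast_add_one,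
    Real.rpow_natCast, inv_pow]

lemma ket_zero (w : List Bool) : ket e 0 w = (√2)⁻¹ • (e (false :: w) - e (true :: w)) := by
  simp [ket_eq]

lemma koopman_sum_ofFn_append
    (hKe : ∀ w, K (e w) = (√2)⁻¹ • (e (false :: w) + e (true :: w)))
    (n : ℕ) (l : List Bool) :
    K (∑ u : Fin n → Bool, e (List.ofFn u ++ l)) =
      (√2)⁻¹ • ∑ u : Fin (n + 1) → Bool, e (List.ofFn u ++ l) := by
  rw [map_sum, sum_ofFn_append_succ, Finset.smul_sum]
  exact Finset.sum_congr rfl fun u _ => hKe _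

lemma koopman_ket (hKe : ∀ w, K (e w) = (√2)⁻¹ • (e (false :: w) + e (true :: w)))
    (n : ℕ) (w : List Bool) : K (ket e n w) = ket e (n + 1) w := by
  rw [ket_eq, ket_eq, map_smul, map_sub, koopman_sum_ofFn_append hKe,
    koopman_sum_ofFn_append hKe, ← smul_sub, smul_smul, pow_succ _ (n + 1)]

lemma koopman_pow_ket_zero
    (hKe : ∀ w, K (e w) = (√2)⁻¹ • (e (false :: w) + e (true :: w)))
    (n : ℕ) (w : List Bool) : (K ^ n) (ket e 0 w) = ket e n w := by
  induction n with
  | zero => rfl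
  | succ n ih => rw [pow_succ', mul_apply_eq_comp, ih, koopman_ket hKe]

lemma ruelle_sum_ofFn_append (hLe : ∀ b w, L (e (b :: w)) = (√2)⁻¹ • e w) (n : ℕ)
    (l : List Bool) :
    L (∑ u : Fin (n + 1) → Bool, e (List.ofFn u ++ l)) =
      √2 • ∑ u : Fin n → Bool, e (List.ofFn u ++ l) := by
  rw [map_sum, sum_ofFn_append_succ (fun v => L (e v)), Finset.smul_sum]
  refine Finset.sum_congr rfl fun u _ => ?_
  rw [hLe, hLe, ← two_smul ℝ, smul_smul, ← div_eq_mul_inv, Real.div_sqrt]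

lemma ruelle_ket_succ (hLe : ∀ b w, L (e (b :: w)) = (√2)⁻¹ • e w)
    (n : ℕ) (w : List Bool) :
    L (ket e (n + 1) w) = ket e n w := by
  rw [ket_eq, ket_eq, map_smul, map_sub, ruelle_sum_ofFn_append hLe,
    ruelle_sum_ofFn_append hLe, ← smul_sub, smul_smul, pow_succ _ (n + 1), mul_assoc,
    inv_mul_cancel₀ (by positivity), mul_one]

lemma ruelle_ket_zero (hLe : ∀ b w, L (e (b :: w)) = (√2)⁻¹ • e w) (w : List Bool) :
    L (ket e 0 w) = 0 := by
  rw [ket_zero, map_smul, map_sub, hLe, hLe, sub_self, smul_zero]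

lemma norm_ket (hK : ∀ g, ‖K g‖ = ‖g‖)
    (hKe : ∀ w, K (e w) = (√2)⁻¹ • (e (false :: w) + e (true :: w)))
    (hnorm : ∀ w, ‖e w‖ = 1) (horth : ∀ w, ⟪e (false :: w), e (true :: w)⟫_ℝ = 0)
    (n : ℕ) (w : List Bool) : ‖ket e n w‖ = 1 := by
  induction n with
  | zero =>
    have hdiff : ‖e (false :: w) - e (true :: w)‖ = √2 := by
      rw [← Real.sqrt_mul_self (norm_nonneg _), norm_sub_sq_eq_norm_sq_add_norm_sq_real (horth w),
        hnorm, hnorm]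
      norm_num
    rw [ket_zero, norm_smul, hdiff, norm_inv, Real.norm_of_nonneg (Real.sqrt_nonneg 2),
      inv_mul_cancel₀ (by positivity)]
  | succ n ih => rw [← koopman_ket hKe, hK, ih]

end Ket

theorem stmt19_general
    (μ : Measure Ω) [IsProbabilityMeasure μ]
    (hμ : ∀ w : List Bool, μ (cylinder w) = (1 / 2) ^ w.length)
    (K L : E μ →L[ℝ] E μ)
    (hK : ∀ g : E μ, (K g : Ω → ℝ) =ᵐ[μ] fun x => g (shiftMap x))
    (hL : ∀ g : E μ, (L g : Ω → ℝ) =ᵐ[μ]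
      fun x => (g (consSeq false x) + g (consSeq true x)) / 2)
    (e : List Bool → E μ) (he : ∀ w : List Bool, (e w : Ω → ℝ) =ᵐ[μ] haarFun w) :
    (∀ (n : ℕ) (w : List Bool), ‖ket e n w‖ = 1) ∧
    (∀ (n : ℕ) (w : List Bool), K (ket e n w) = ket e (n + 1) w) ∧
    (∀ (n : ℕ) (w : List Bool), 1 ≤ n → L (ket e n w) = ket e (n - 1) w) ∧
    (∀ w : List Bool, L (ket e 0 w) = 0) ∧
    (∀ (n : ℕ) (w : List Bool), 1 ≤ n →
      (K ^ n) (ket e 0 w) = ket e n w ∧ K (L (ket e n w)) = ket e n w) := by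
  have hKe := koopman_haar hμ hK he
  have hLe := ruelle_haar hμ hL he
  refine ⟨norm_ket (norm_koopman hμ hK) hKe (norm_haar hμ he) (inner_haar_false_true he),
    koopman_ket hKe, ?_, ruelle_ket_zero hLe, ?_⟩
  · rintro (_ | n) w hn
    · omega
    · exact ruelle_ket_succ hLe n w
  · rintro (_ | n) w hn
    · omega
    · exact ⟨koopman_pow_ket_zero hKe _ w, by rw [ruelle_ket_succ hLe, koopman_ket hKe]⟩

/-- Properties of the vectors `|n,w⟩`: they are unit vectors, `K|n,w⟩ = |n+1,w⟩`,
`L|n,w⟩ = |n−1,w⟩` for `n ≥ 1`, `L|0,w⟩ = 0`, and consequently `Kⁿ|0,w⟩ = |n,w⟩`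
and `KL|n,w⟩ = |n,w⟩` for `n ≥ 1`. -/
theorem stmt19
    (μ : Measure Ω) [IsProbabilityMeasure μ]
    (hμ : ∀ w : List Bool, μ (cylinder w) = (1 / 2) ^ w.length)
    (K L : E μ →L[ℝ] E μ)
    (hK : ∀ g : E μ, (K g : Ω → ℝ) =ᵐ[μ] fun x => g (shiftMap x))
    (hL : ∀ g : E μ, (L g : Ω → ℝ) =ᵐ[μ]
      fun x => (g (consSeq false x) + g (consSeq true x)) / 2)
    (hadj : ContinuousLinearMap.adjoint K = L)
    (e : List Bool → E μ) (he : ∀ w : List Bool, (e w : Ω → ℝ) =ᵐ[μ] haarFun w) :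
    (∀ (n : ℕ) (w : List Bool), ‖ket e n w‖ = 1) ∧
    (∀ (n : ℕ) (w : List Bool), K (ket e n w) = ket e (n + 1) w) ∧
    (∀ (n : ℕ) (w : List Bool), 1 ≤ n → L (ket e n w) = ket e (n - 1) w) ∧
    (∀ w : List Bool, L (ket e 0 w) = 0) ∧
    (∀ (n : ℕ) (w : List Bool), 1 ≤ n →
      (K ^ n) (ket e 0 w) = ket e n w ∧ K (L (ket e n w)) = ket e n w) :=
  stmt19_general μ hμ K L hK hL e he
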